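/- arXiv:2507.05005 — 3 statements merged into one kernel-verified Lean document; each statement's English description precedes it below -/
import Mathlib

section
/- For every μ ∈ (0,1] there exists a constant C such that for all a > 0, h > 0 with a h ≤ 1, and all k ≥ 1, setting ξ = 1 - a h, one has | e^{-a h k} − ξ^{k} | ≤ C a^{1+μ} h^{1+μ} k e^{-a h (k-1)} ≤ C (a h)^{μ}. -/
private lemma pow_sub_pow_le_aux (a b : ℝ) (hb : 0 ≤ b) (hab : b ≤ a) :
    ∀ k : ℕ, a ^ k - b ^ k ≤ (k : ℝ) * (a - b) * a ^ (k - 1) := by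
  intro k
  induction k with
  | zero => simp
  | succ n ih =>
    rcases Nat.eq_zero_or_pos n with hn | hn
    · subst hn; simp
    have ha : 0 ≤ a := hb.trans hab
    have h1 : a ^ (n + 1) - b ^ (n + 1) = a * (a ^ n - b ^ n) + (a - b) * b ^ n := by
      ring
    have h2 : a * (a ^ n - b ^ n) ≤ a * ((n : ℝ) * (a - b) * a ^ (n - 1)) :=
      mul_le_mul_of_nonneg_left ih ha
    have h3 : a * ((n : ℝ) * (a - b) * a ^ (n - 1)) = (n : ℝ) * (a - b) * a ^ n := by
      rw [show a * ((n : ℝ) * (a - b) * a ^ (n - 1)) = (n : ℝ) * (a - b) * (a * a ^ (n - 1)) by ring,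
        ← pow_succ']
      congr 2
      omega
    have h4 : (a - b) * b ^ n ≤ (a - b) * a ^ n :=
      mul_le_mul_of_nonneg_left (pow_le_pow_left₀ hb hab n) (by linarith)
    have : a ^ (n + 1) - b ^ (n + 1) ≤ (n : ℝ) * (a - b) * a ^ n + (a - b) * a ^ n := by
      rw [h1]; linarith [h2.trans_eq h3]
    calc a ^ (n + 1) - b ^ (n + 1) ≤ (n : ℝ) * (a - b) * a ^ n + (a - b) * a ^ n := this
      _ = ((n + 1 : ℕ) : ℝ) * (a - b) * a ^ ((n + 1) - 1) := by push_cast; ring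

theorem stmt9 (μ : ℝ) (hμ0 : 0 < μ) (hμ1 : μ ≤ 1) :
    ∃ C : ℝ, 0 < C ∧ ∀ a h : ℝ, 0 < a → 0 < h → a * h ≤ 1 → ∀ k : ℕ, 1 ≤ k →
      |Real.exp (-(a * h * (k:ℝ))) - (1 - a * h) ^ k|
          ≤ C * a ^ (1 + μ) * h ^ (1 + μ) * (k:ℝ) * Real.exp (-(a * h * ((k:ℝ) - 1)))
      ∧ C * a ^ (1 + μ) * h ^ (1 + μ) * (k:ℝ) * Real.exp (-(a * h * ((k:ℝ) - 1)))
          ≤ C * (a * h) ^ μ := by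
  refine ⟨1, one_pos, fun a h ha hh hah k hk => ?_⟩
  set x := a * h with hxdef
  have hx0 : 0 < x := mul_pos ha hh
  have hb0 : (0:ℝ) ≤ 1 - x := by linarith
  -- 1 - x ≤ exp(-x)
  have hba : 1 - x ≤ Real.exp (-x) := by
    have := Real.add_one_le_exp (-x); linarith
  -- exp(-x) ≤ 1 - x + x^2
  have hgap : Real.exp (-x) - (1 - x) ≤ x ^ 2 := by
    have h1x : (0:ℝ) < 1 + x := by linarith
    have he : 1 + x ≤ Real.exp x := by have := Real.add_one_le_exp x; linarith
    have hmul : Real.exp (-x) * (1 + x) ≤ 1 := by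
      calc Real.exp (-x) * (1 + x) ≤ Real.exp (-x) * Real.exp x :=
            mul_le_mul_of_nonneg_left he (Real.exp_pos _).le
        _ = 1 := by rw [← Real.exp_add]; simp
    nlinarith [Real.exp_pos (-x)]
  -- key rewriting: exp(-(x*k)) = exp(-x)^k
  have hek : Real.exp (-(x * (k:ℝ))) = Real.exp (-x) ^ k := by
    rw [← Real.exp_nat_mul]; ring_nf
  have hek1 : Real.exp (-x) ^ (k - 1) = Real.exp (-(x * ((k:ℝ) - 1))) := by
    rw [← Real.exp_nat_mul]
    congr 1
    have : ((k - 1 : ℕ) : ℝ) = (k : ℝ) - 1 := by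
      have := Nat.cast_sub hk (R := ℝ); simpa using this
    rw [this]; ring
  have hpow : (1 - x) ^ k ≤ Real.exp (-x) ^ k := pow_le_pow_left₀ hb0 hba k
  have habs : |Real.exp (-(x * (k:ℝ))) - (1 - x) ^ k|
      = Real.exp (-x) ^ k - (1 - x) ^ k := by
    rw [hek, abs_of_nonneg (by linarith)]
  have hmain := pow_sub_pow_le_aux (Real.exp (-x)) (1 - x) hb0 hba k
  -- x^2 ≤ x^(1+μ)
  have hx2 : x ^ 2 ≤ x ^ (1 + μ) := by
    have : x ^ (2:ℝ) ≤ x ^ (1 + μ) :=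
      Real.rpow_le_rpow_of_exponent_ge hx0 hah (by linarith)
    rwa [Real.rpow_two] at this
  have hxrw : (1:ℝ) * a ^ (1 + μ) * h ^ (1 + μ) = x ^ (1 + μ) := by
    rw [one_mul, hxdef, Real.mul_rpow ha.le hh.le]
  have hkpos : (0:ℝ) < (k:ℝ) := by exact_mod_cast hk
  have hexp_pos := Real.exp_pos (-(x * ((k:ℝ) - 1)))
  constructor
  · rw [habs]
    calc Real.exp (-x) ^ k - (1 - x) ^ k
        ≤ (k:ℝ) * (Real.exp (-x) - (1 - x)) * Real.exp (-x) ^ (k - 1) := hmain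
      _ ≤ (k:ℝ) * x ^ 2 * Real.exp (-x) ^ (k - 1) := by
          apply mul_le_mul_of_nonneg_right _ (pow_nonneg (Real.exp_pos _).le _)
          exact mul_le_mul_of_nonneg_left hgap hkpos.le
      _ ≤ (k:ℝ) * x ^ (1 + μ) * Real.exp (-x) ^ (k - 1) := by
          apply mul_le_mul_of_nonneg_right _ (pow_nonneg (Real.exp_pos _).le _)
          exact mul_le_mul_of_nonneg_left hx2 hkpos.le
      _ = 1 * a ^ (1 + μ) * h ^ (1 + μ) * (k:ℝ) * Real.exp (-(x * ((k:ℝ) - 1))) := by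
          rw [hxrw, hek1]; ring
  · rw [hxrw]
    have hsplit : x ^ (1 + μ) = x * x ^ μ := by
      rw [Real.rpow_add hx0, Real.rpow_one]
    rw [hsplit]
    have hxμ : 0 ≤ x ^ μ := (Real.rpow_pos_of_pos hx0 μ).le
    have key : x * (k:ℝ) * Real.exp (-(x * ((k:ℝ) - 1))) ≤ 1 := by
      have hu : x * (k:ℝ) ≤ Real.exp (x * (k:ℝ) - 1) := by
        have := Real.add_one_le_exp (x * (k:ℝ) - 1); linarith
      have hrw : x * (k:ℝ) * Real.exp (-(x * ((k:ℝ) - 1)))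
          = (x * (k:ℝ)) * Real.exp (-(x * (k:ℝ))) * Real.exp x := by
        rw [show -(x * ((k:ℝ) - 1)) = -(x * (k:ℝ)) + x by ring, Real.exp_add]; ring
      rw [hrw]
      have h1 : (x * (k:ℝ)) * Real.exp (-(x * (k:ℝ))) ≤ Real.exp (-1) := by
        calc (x * (k:ℝ)) * Real.exp (-(x * (k:ℝ)))
            ≤ Real.exp (x * (k:ℝ) - 1) * Real.exp (-(x * (k:ℝ))) :=
              mul_le_mul_of_nonneg_right hu (Real.exp_pos _).le
          _ = Real.exp (-1) := by rw [← Real.exp_add]; ring_nf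
      have h2 : Real.exp x ≤ Real.exp 1 := Real.exp_le_exp.mpr hah
      calc (x * (k:ℝ)) * Real.exp (-(x * (k:ℝ))) * Real.exp x
          ≤ Real.exp (-1) * Real.exp 1 := by
            apply mul_le_mul h1 h2 (Real.exp_pos _).le (Real.exp_pos _).le
        _ = 1 := by rw [← Real.exp_add]; simp
    calc x * x ^ μ * (k:ℝ) * Real.exp (-(x * ((k:ℝ) - 1)))
        = x ^ μ * (x * (k:ℝ) * Real.exp (-(x * ((k:ℝ) - 1)))) := by ring
      _ ≤ x ^ μ * 1 := mul_le_mul_of_nonneg_left key hxμ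
      _ = 1 * x ^ μ := by ring
end

section
/- Let a > 0, h > 0 with a h ≤ 1, ξ = 1 - a h, t_j = j h. For every μ ∈ (0,1] there is C (depending only on μ) such that Σ_{j=1}^{k} ∫_{t_{j-1}}^{t_j} ( e^{-a(t_k - s)} − ξ^{k-j} )² ds ≤ C a^{2μ-1} h^{2μ}. -/
/-!
With `x = a h` and `n = k - j`, on the `j`-th step the exact kernel `e^{-a(t_k - s)}` lies between
`e^{-(n+1)x} ≥ (1 - x) e^{-nx}` and `e^{-nx}`, while `0 ≤ e^{-nx} - (1 - x)^n ≤ e n x² e^{-nx}` by the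
mean value bound for `c^n - b^n` and `e^{-x} - (1 - x) ≤ x²`. As `(nx)² e^{-nx} ≤ 2`, the squared
error on the step is `O(x² e^{-nx})`, and the geometric series in `e^{-x}` is `O(1/x)`; so the sum
is `O(x h) = O(a h²)`, which is at most `a^{2μ-1} h^{2μ}` because `a h ≤ 1` and `2μ - 1 ≤ 1`.
-/

open Real Finset

lemma sum_Icc_one_sub_eq_sum_range {M : Type*} [AddCommMonoid M] (f : ℕ → M) (k : ℕ) :
    ∑ j ∈ Icc 1 k, f (k - j) = ∑ n ∈ range k, f n := by
  rw [← sum_range_reflect f k, ← Finset.Ico_add_one_right_eq_Icc, sum_Ico_eq_sum_range]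
  refine sum_congr (by simp) fun i _ => ?_
  congr 1
  omega

lemma sq_mul_exp_neg_le_two {u : ℝ} (hu : 0 ≤ u) : u ^ 2 * exp (-u) ≤ 2 := by
  have := Real.pow_div_factorial_le_exp u hu 2
  rw [exp_neg, ← div_eq_mul_inv, div_le_iff₀ (exp_pos u)]
  norm_num [Nat.factorial] at this
  linarith

section

variable {x : ℝ}

lemma mul_sum_range_exp_neg_pow_le (hx : 0 < x) (k : ℕ) :
    x * ∑ n ∈ range k, exp (-x) ^ n ≤ exp x := by
  have hc : exp (-x) < 1 := exp_lt_one_iff.2 (by linarith)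
  have hgeom : ∑ n ∈ range k, exp (-x) ^ n ≤ 1 / (1 - exp (-x)) := by
    have := geom_sum_Ico_le_of_lt_one (m := 0) (n := k) (exp_pos (-x)).le hc
    rwa [← range_eq_Ico, pow_zero] at this
  have hx_le : x ≤ exp x * (1 - exp (-x)) := by
    rw [mul_sub, mul_one, ← exp_add, add_neg_cancel, exp_zero]
    linarith [add_one_le_exp x]
  calc x * ∑ n ∈ range k, exp (-x) ^ n ≤ x * (1 / (1 - exp (-x))) := by gcongr
    _ ≤ exp x := by
      rw [mul_one_div, div_le_iff₀ (by linarith)]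
      exact hx_le

lemma exp_neg_pow_sub_one_sub_pow_le (hx0 : 0 ≤ x) (hx1 : x ≤ 1) (n : ℕ) :
    exp (-x) ^ n - (1 - x) ^ n ≤ exp 1 * n * x ^ 2 * exp (-x) ^ n := by
  set c := exp (-x)
  have hbc : 1 - x ≤ c := one_sub_le_exp_neg x
  have hc1 : c ≤ 1 := exp_le_one_iff.2 (by linarith)
  have hcb : c - (1 - x) ≤ x ^ 2 := by
    have := abs_exp_sub_one_sub_id_le (x := -x) (by rwa [abs_neg, abs_of_nonneg hx0])
    rw [neg_sq] at this
    linarith [(abs_le.1 this).2]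
  have hpred : c ^ (n - 1) ≤ exp 1 * c ^ n :=
    calc c ^ (n - 1) = c ^ (n - 1 + 1) * exp x := by
          rw [pow_succ, mul_assoc, ← exp_add, neg_add_cancel, exp_zero, mul_one]
      _ ≤ c ^ n * exp 1 :=
          mul_le_mul (pow_le_pow_of_le_one (exp_pos _).le hc1 (by omega))
            (exp_le_exp.2 hx1) (exp_pos _).le (by positivity)
      _ = exp 1 * c ^ n := mul_comm _ _
  calc c ^ n - (1 - x) ^ n ≤ |c ^ n - (1 - x) ^ n| := le_abs_self _
    _ ≤ |c - (1 - x)| * n * max |c| |1 - x| ^ (n - 1) := abs_pow_sub_pow_le ..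
    _ = (c - (1 - x)) * n * c ^ (n - 1) := by
      rw [abs_of_nonneg (by linarith), abs_of_pos (exp_pos _), abs_of_nonneg (by linarith),
        max_eq_left hbc]
    _ ≤ x ^ 2 * n * (exp 1 * c ^ n) := by gcongr
    _ = exp 1 * n * x ^ 2 * c ^ n := by ring

lemma sq_exp_neg_sub_one_sub_pow_le (hx0 : 0 ≤ x) (hx1 : x ≤ 1) {n : ℕ} {τ : ℝ}
    (hτ₁ : n * x ≤ τ) (hτ₂ : τ ≤ (n + 1) * x) :
    (exp (-τ) - (1 - x) ^ n) ^ 2 ≤ (1 + 2 * exp 1 ^ 2) * x ^ 2 * exp (-x) ^ n := by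
  set c := exp (-x)
  have hcn : exp (-(n * x)) = c ^ n := by rw [← exp_nat_mul]; ring_nf
  have hcn1 : c ^ n ≤ 1 := pow_le_one₀ (exp_pos _).le (exp_le_one_iff.2 (by linarith))
  have hupper : exp (-τ) ≤ c ^ n := hcn ▸ exp_le_exp.2 (by linarith)
  have hlower : (1 - x) * c ^ n ≤ exp (-τ) :=
    calc (1 - x) * c ^ n ≤ c * c ^ n := by gcongr; exact one_sub_le_exp_neg x
      _ = exp (-((n + 1) * x)) := by rw [← hcn, ← exp_add]; ring_nf
      _ ≤ exp (-τ) := exp_le_exp.2 (by linarith)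
  have hbn : (1 - x) ^ n ≤ c ^ n := pow_le_pow_left₀ (by linarith) (one_sub_le_exp_neg x) n
  have hdiff := exp_neg_pow_sub_one_sub_pow_le hx0 hx1 n
  have hnx : (n * x) ^ 2 * c ^ n ≤ 2 := hcn ▸ sq_mul_exp_neg_le_two (by positivity)
  set A := x * c ^ n
  set B := exp 1 * n * x ^ 2 * c ^ n
  have hsq : (exp (-τ) - (1 - x) ^ n) ^ 2 ≤ A ^ 2 + B ^ 2 := by
    have : -A ≤ exp (-τ) - (1 - x) ^ n := by linarith
    have : exp (-τ) - (1 - x) ^ n ≤ B := by linarith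
    nlinarith [sq_nonneg A, sq_nonneg B]
  have hA : A ^ 2 ≤ x ^ 2 * c ^ n := by
    have : A ^ 2 = x ^ 2 * c ^ n * c ^ n := by ring
    rw [this]
    exact mul_le_of_le_one_right (by positivity) hcn1
  have hB : B ^ 2 ≤ 2 * exp 1 ^ 2 * x ^ 2 * c ^ n := by
    have : B ^ 2 = exp 1 ^ 2 * x ^ 2 * c ^ n * ((n * x) ^ 2 * c ^ n) := by ring
    rw [this]
    nlinarith [show 0 ≤ exp 1 ^ 2 * x ^ 2 * c ^ n by positivity]
  linarith

end

lemma integral_sq_exp_sub_euler_le {a h : ℝ} (ha : 0 ≤ a) (hh : 0 ≤ h) (hah : a * h ≤ 1)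
    {j k : ℕ} (hjk : j ≤ k) :
    ∫ s in ((j : ℝ) - 1) * h..(j : ℝ) * h,
        (exp (-(a * ((k : ℝ) * h - s))) - (1 - a * h) ^ (k - j)) ^ 2
      ≤ h * ((1 + 2 * exp 1 ^ 2) * (a * h) ^ 2 * exp (-(a * h)) ^ (k - j)) := by
  set K := (1 + 2 * exp 1 ^ 2) * (a * h) ^ 2 * exp (-(a * h)) ^ (k - j)
  have hbound : ∀ s ∈ Set.uIoc (((j : ℝ) - 1) * h) ((j : ℝ) * h),
      ‖(exp (-(a * ((k : ℝ) * h - s))) - (1 - a * h) ^ (k - j)) ^ 2‖ ≤ K := by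
    intro s hs
    rw [Set.uIoc_of_le (by nlinarith)] at hs
    rw [norm_of_nonneg (sq_nonneg _)]
    apply sq_exp_neg_sub_one_sub_pow_le (mul_nonneg ha hh) hah
    · push_cast [hjk]; nlinarith [hs.2]
    · push_cast [hjk]; nlinarith [hs.1]
  calc _ ≤ ‖∫ s in ((j : ℝ) - 1) * h..(j : ℝ) * h,
          (exp (-(a * ((k : ℝ) * h - s))) - (1 - a * h) ^ (k - j)) ^ 2‖ := le_norm_self _
    _ ≤ K * |(j : ℝ) * h - ((j : ℝ) - 1) * h| :=
      intervalIntegral.norm_integral_le_of_norm_le_const hbound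
    _ = h * K := by rw [show (j : ℝ) * h - ((j : ℝ) - 1) * h = h by ring, abs_of_nonneg hh]; ring

lemma mul_sq_le_rpow_mul_rpow {a h μ : ℝ} (ha : 0 < a) (hh : 0 < h) (hah : a * h ≤ 1)
    (hμ : μ ≤ 1) : a * h ^ 2 ≤ a ^ (2 * μ - 1) * h ^ (2 * μ) :=
  calc a * h ^ 2 = (a * h) * h := by ring
    _ ≤ (a * h) ^ (2 * μ - 1) * h := by
      gcongr
      exact self_le_rpow_of_le_one (by positivity) hah (by linarith)
    _ = a ^ (2 * μ - 1) * h ^ (2 * μ) := by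
      rw [mul_rpow ha.le hh.le, mul_assoc, ← rpow_add_one hh.ne', sub_add_cancel]

theorem stmt11_general (μ : ℝ) (hμ1 : μ ≤ 1) :
    ∃ C : ℝ, 0 < C ∧ ∀ a h : ℝ, 0 < a → 0 < h → a * h ≤ 1 → ∀ k : ℕ,
      (∑ j ∈ Finset.Icc 1 k,
          ∫ s in (((j:ℝ) - 1) * h)..((j:ℝ) * h),
            (Real.exp (-(a * ((k:ℝ) * h - s))) - (1 - a * h) ^ (k - j)) ^ 2)
        ≤ C * a ^ (2 * μ - 1) * h ^ (2 * μ) := by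
  set K := 1 + 2 * exp 1 ^ 2
  refine ⟨K * exp 1, by positivity, fun a h ha hh hah k => ?_⟩
  have hx : 0 < a * h := mul_pos ha hh
  calc _ ≤ ∑ j ∈ Icc 1 k, h * (K * (a * h) ^ 2 * exp (-(a * h)) ^ (k - j)) :=
        sum_le_sum fun j hj => integral_sq_exp_sub_euler_le ha.le hh.le hah (mem_Icc.1 hj).2
    _ = h * K * (a * h) * ((a * h) * ∑ n ∈ range k, exp (-(a * h)) ^ n) := by
        rw [← sum_Icc_one_sub_eq_sum_range (fun n => exp (-(a * h)) ^ n), mul_sum, mul_sum]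
        refine sum_congr rfl fun j _ => by ring
    _ ≤ h * K * (a * h) * exp 1 := by
        gcongr
        exact (mul_sum_range_exp_neg_pow_le hx k).trans (exp_le_exp.2 hah)
    _ = K * exp 1 * (a * h ^ 2) := by ring
    _ ≤ K * exp 1 * (a ^ (2 * μ - 1) * h ^ (2 * μ)) :=
        mul_le_mul_of_nonneg_left (mul_sq_le_rpow_mul_rpow ha hh hah hμ1) (by positivity)
    _ = K * exp 1 * a ^ (2 * μ - 1) * h ^ (2 * μ) := by ring

theorem stmt11 (μ : ℝ) (hμ0 : 0 < μ) (hμ1 : μ ≤ 1) :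
    ∃ C : ℝ, 0 < C ∧ ∀ a h : ℝ, 0 < a → 0 < h → a * h ≤ 1 → ∀ k : ℕ,
      (∑ j ∈ Finset.Icc 1 k,
          ∫ s in (((j:ℝ) - 1) * h)..((j:ℝ) * h),
            (Real.exp (-(a * ((k:ℝ) * h - s))) - (1 - a * h) ^ (k - j)) ^ 2)
        ≤ C * a ^ (2 * μ - 1) * h ^ (2 * μ) :=
  stmt11_general μ hμ1
end

section
/- Let (Z_n)_{n≥1} be independent nonnegative random variables and p ≥ 2. Then E[(Σ_n Z_n)^{p/2}] ≤ C_p max{ (Σ_n E[Z_n])^{p/2}, Σ_n E[Z_n^{p/2}] } for a constant C_p depending only on p. -/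
/-!
Let `W i ≥ 0` be independent, `q ≥ 1` and `S = ∑ i ∈ s, W i`. Since `S ^ q = ∑ i, W i * S ^ (q - 1)`
and `S = W i + T i` with `T i` independent of `W i`,
`E[S ^ q] ≤ 2 ^ (q - 1) * (∑ i, E[W i ^ q] + (∑ i, E[W i]) * E[S ^ (q - 1)])`,
and Lyapunov's inequality `E[S ^ (q - 1)] ≤ E[S ^ q] ^ ((q - 1) / q)` makes this a self-bounding
inequality for `A = E[S ^ q]`. As `A < ∞` whenever the `q`-th moments are finite, the term
`A ^ ((q - 1) / q)` can be absorbed, giving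
`A ≤ 2 ^ (q * q) * max ((∑ i, E[W i]) ^ q) (∑ i, E[W i ^ q])` uniformly in `s`;
monotone convergence passes to the series.
-/

open MeasureTheory ProbabilityTheory Finset
open scoped ENNReal

namespace ENNReal

lemma rpow_eq_mul_rpow_sub_one (a : ℝ≥0∞) {q : ℝ} (hq : 1 ≤ q) : a ^ q = a * a ^ (q - 1) := by
  conv_lhs => rw [← add_sub_cancel (1 : ℝ) q]
  rw [rpow_add_of_nonneg _ _ zero_le_one (by linarith), rpow_one]

lemma add_rpow_le_two_rpow_mul_add_rpow (a b : ℝ≥0∞) {r : ℝ} (hr : 0 ≤ r) :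
    (a + b) ^ r ≤ 2 ^ r * (a ^ r + b ^ r) :=
  calc (a + b) ^ r ≤ (2 * max a b) ^ r := by
        gcongr
        rw [two_mul]
        exact add_le_add (le_max_left a b) (le_max_right a b)
    _ = 2 ^ r * max (a ^ r) (b ^ r) := by
        rw [mul_rpow_of_nonneg _ _ hr, (monotone_rpow_of_nonneg hr).map_max]
    _ ≤ 2 ^ r * (a ^ r + b ^ r) := by
        gcongr
        exact max_le le_self_add le_add_self

lemma mul_add_rpow_sub_one_le (a b : ℝ≥0∞) {q : ℝ} (hq : 1 ≤ q) :
    a * (a + b) ^ (q - 1) ≤ 2 ^ (q - 1) * (a ^ q + a * b ^ (q - 1)) :=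
  calc a * (a + b) ^ (q - 1) ≤ a * (2 ^ (q - 1) * (a ^ (q - 1) + b ^ (q - 1))) := by
        gcongr
        exact add_rpow_le_two_rpow_mul_add_rpow a b (by linarith)
    _ = 2 ^ (q - 1) * (a * a ^ (q - 1) + a * b ^ (q - 1)) := by ring
    _ = 2 ^ (q - 1) * (a ^ q + a * b ^ (q - 1)) := by rw [← rpow_eq_mul_rpow_sub_one a hq]

lemma le_max_of_le_mul_add_mul_rpow {A B K m : ℝ≥0∞} {q : ℝ} (hA : A ≠ ∞) (hq : 1 ≤ q)
    (h : A ≤ K * (B + m * A ^ ((q - 1) / q))) : A ≤ max ((2 * K * m) ^ q) (2 * K * B) := by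
  have hq0 : 0 < q := by linarith
  -- either `A ≤ (2 K m) ^ q`, or `K m A ^ ((q - 1) / q) ≤ A / 2` can be absorbed into the left side
  by_cases hsmall : A ≤ (2 * K * m) ^ q
  · exact le_max_of_le_left hsmall
  refine le_max_of_le_right ?_
  have hroot : 2 * K * m ≤ A ^ q⁻¹ := (le_rpow_inv_iff hq0).2 (not_le.1 hsmall).le
  have hsplit : A ^ q⁻¹ * A ^ ((q - 1) / q) = A := by
    rw [← rpow_add_of_nonneg _ _ (by positivity) (div_nonneg (by linarith) hq0.le),
      show q⁻¹ + (q - 1) / q = 1 by field_simp; ring, rpow_one]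
  have habsorb : 2 * (K * (m * A ^ ((q - 1) / q))) ≤ A :=
    calc 2 * (K * (m * A ^ ((q - 1) / q))) = 2 * K * m * A ^ ((q - 1) / q) := by ring
      _ ≤ A ^ q⁻¹ * A ^ ((q - 1) / q) := by gcongr
      _ = A := hsplit
  refine ENNReal.le_of_add_le_add_right hA ?_
  calc A + A = 2 * A := (two_mul A).symm
    _ ≤ 2 * (K * B + K * (m * A ^ ((q - 1) / q))) := by rw [← mul_add]; gcongr
    _ = 2 * K * B + 2 * (K * (m * A ^ ((q - 1) / q))) := by ring
    _ ≤ 2 * K * B + A := by gcongr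

lemma ofReal_rpow_tsum_le {α : Type*} {x : α → ℝ} (hx : ∀ n, 0 ≤ x n) {q : ℝ} (hq : 0 < q) :
    ENNReal.ofReal ((∑' n, x n) ^ q) ≤ (∑' n, ENNReal.ofReal (x n)) ^ q := by
  by_cases hs : Summable x
  · rw [← ofReal_rpow_of_nonneg (tsum_nonneg hx) hq.le, ofReal_tsum_of_nonneg hx hs]
  · simp [tsum_eq_zero_of_not_summable hs, Real.zero_rpow hq.ne']

end ENNReal

section Moments

variable {Ω ι : Type*} [MeasurableSpace Ω] {P : Measure Ω} {q : ℝ}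

lemma lintegral_rpow_le_rpow_lintegral_rpow [IsProbabilityMeasure P] {f : Ω → ℝ≥0∞}
    (hf : AEMeasurable f P) {r s : ℝ} (hr : 0 < r) (hrs : r ≤ s) :
    ∫⁻ ω, f ω ^ r ∂P ≤ (∫⁻ ω, f ω ^ s ∂P) ^ (r / s) := by
  have h := eLpNorm'_le_eLpNorm'_of_exponent_le hr hrs P hf.aestronglyMeasurable
  simp only [eLpNorm', enorm_eq_self] at h
  have := ENNReal.rpow_le_rpow h hr.le
  rwa [← ENNReal.rpow_mul, ← ENNReal.rpow_mul, one_div_mul_cancel hr.ne', ENNReal.rpow_one,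
    one_div_mul_eq_div] at this

lemma lintegral_rpow_sub_one_le [IsProbabilityMeasure P] {f : Ω → ℝ≥0∞} (hf : AEMeasurable f P)
    (hq : 1 ≤ q) : ∫⁻ ω, f ω ^ (q - 1) ∂P ≤ (∫⁻ ω, f ω ^ q ∂P) ^ ((q - 1) / q) := by
  rcases hq.eq_or_lt with rfl | hq
  · simp
  · exact lintegral_rpow_le_rpow_lintegral_rpow hf (by linarith) (by linarith)

lemma lintegral_rpow_sum_ne_top {W : ι → Ω → ℝ≥0∞} (hW : ∀ i, AEMeasurable (W i) P)
    (hq : 1 ≤ q) {s : Finset ι} (hfin : ∑ i ∈ s, ∫⁻ ω, W i ω ^ q ∂P ≠ ∞) :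
    ∫⁻ ω, (∑ i ∈ s, W i ω) ^ q ∂P ≠ ∞ := by
  have hle : ∫⁻ ω, (∑ i ∈ s, W i ω) ^ q ∂P ≤
      (#s : ℝ≥0∞) ^ (q - 1) * ∑ i ∈ s, ∫⁻ ω, W i ω ^ q ∂P :=
    calc ∫⁻ ω, (∑ i ∈ s, W i ω) ^ q ∂P
        ≤ ∫⁻ ω, (#s : ℝ≥0∞) ^ (q - 1) * ∑ i ∈ s, W i ω ^ q ∂P :=
          lintegral_mono fun ω => ENNReal.rpow_sum_le_const_mul_sum_rpow s _ hq
      _ = (#s : ℝ≥0∞) ^ (q - 1) * ∑ i ∈ s, ∫⁻ ω, W i ω ^ q ∂P := by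
          rw [lintegral_const_mul'' _ (s.aemeasurable_fun_sum fun i _ => (hW i).pow_const q),
            lintegral_finsetSum' s fun i _ => (hW i).pow_const q]
  exact ne_top_of_le_ne_top (ENNReal.mul_ne_top
    (ENNReal.rpow_ne_top_of_nonneg (by linarith) (ENNReal.natCast_ne_top #s)) hfin) hle

lemma ofReal_integral_le_lintegral_ofReal {f : Ω → ℝ} (hf : ∀ ω, 0 ≤ f ω) :
    ENNReal.ofReal (∫ ω, f ω ∂P) ≤ ∫⁻ ω, ENNReal.ofReal (f ω) ∂P := by
  rw [← Real.enorm_eq_ofReal (integral_nonneg hf)]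
  simpa only [Real.enorm_eq_ofReal (hf _)] using enorm_integral_le_lintegral_enorm f

lemma tsum_lintegral_ofReal {g : ι → Ω → ℝ} (hg : ∀ n ω, 0 ≤ g n ω)
    (hint : ∀ n, Integrable (g n) P) (hsum : Summable fun n => ∫ ω, g n ω ∂P) :
    ∑' n, ∫⁻ ω, ENNReal.ofReal (g n ω) ∂P = ENNReal.ofReal (∑' n, ∫ ω, g n ω ∂P) := by
  rw [ENNReal.ofReal_tsum_of_nonneg (fun n => integral_nonneg (hg n)) hsum]
  exact tsum_congr fun n => (ofReal_integral_eq_lintegral_ofReal (hint n) (ae_of_all _ (hg n))).symm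

end Moments

namespace ProbabilityTheory.iIndepFun

variable {Ω ι : Type*} [MeasurableSpace Ω] {P : Measure Ω} {q : ℝ}

lemma lintegral_mul_rpow_sum_le {W : ι → Ω → ℝ≥0∞} (hind : iIndepFun W P)
    (hW : ∀ i, AEMeasurable (W i) P) (hq : 1 ≤ q) {s : Finset ι} {i : ι} (hi : i ∈ s) :
    ∫⁻ ω, W i ω * (∑ j ∈ s, W j ω) ^ (q - 1) ∂P ≤
      2 ^ (q - 1) * (∫⁻ ω, W i ω ^ q ∂P +
        (∫⁻ ω, W i ω ∂P) * ∫⁻ ω, (∑ j ∈ s, W j ω) ^ (q - 1) ∂P) := by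
  classical
  set T : Ω → ℝ≥0∞ := fun ω => ∑ j ∈ s.erase i, W j ω
  have hT : AEMeasurable T P := Finset.aemeasurable_fun_sum _ fun j _ => hW j
  have hindep : IndepFun (W i) (fun ω => T ω ^ (q - 1)) P := by
    have := (hind.indepFun_finsetSum_of_notMem₀ hW (s.notMem_erase i)).symm.comp measurable_id
      (measurable_id.pow_const (q - 1))
    simpa [Function.comp_def, Finset.sum_apply] using this
  calc ∫⁻ ω, W i ω * (∑ j ∈ s, W j ω) ^ (q - 1) ∂P
      ≤ ∫⁻ ω, 2 ^ (q - 1) * (W i ω ^ q + W i ω * T ω ^ (q - 1)) ∂P := by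
        refine lintegral_mono fun ω => ?_
        rw [← add_sum_erase s _ hi]
        exact ENNReal.mul_add_rpow_sub_one_le _ _ hq
    _ = 2 ^ (q - 1) * (∫⁻ ω, W i ω ^ q ∂P + (∫⁻ ω, W i ω ∂P) * ∫⁻ ω, T ω ^ (q - 1) ∂P) := by
        rw [lintegral_const_mul' _ _
            (ENNReal.rpow_ne_top_of_nonneg (by linarith) ENNReal.ofNat_ne_top),
          lintegral_add_left' ((hW i).pow_const q),
          lintegral_mul_eq_lintegral_mul_lintegral_of_indepFun'' (hW i) (hT.pow_const _) hindep]
    _ ≤ _ := by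
        gcongr with ω
        exact sum_le_sum_of_subset (erase_subset i s)

lemma lintegral_rpow_sum_le_self_bound [IsProbabilityMeasure P] {W : ι → Ω → ℝ≥0∞}
    (hind : iIndepFun W P) (hW : ∀ i, AEMeasurable (W i) P) (hq : 1 ≤ q) (s : Finset ι) :
    ∫⁻ ω, (∑ i ∈ s, W i ω) ^ q ∂P ≤
      2 ^ (q - 1) * (∑ i ∈ s, ∫⁻ ω, W i ω ^ q ∂P +
        (∑ i ∈ s, ∫⁻ ω, W i ω ∂P) * (∫⁻ ω, (∑ i ∈ s, W i ω) ^ q ∂P) ^ ((q - 1) / q)) := by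
  have hS : AEMeasurable (fun ω => ∑ i ∈ s, W i ω) P := s.aemeasurable_fun_sum fun i _ => hW i
  calc ∫⁻ ω, (∑ i ∈ s, W i ω) ^ q ∂P
      = ∑ i ∈ s, ∫⁻ ω, W i ω * (∑ j ∈ s, W j ω) ^ (q - 1) ∂P := by
        rw [← lintegral_finsetSum' (f := fun i ω => W i ω * (∑ j ∈ s, W j ω) ^ (q - 1)) s
          fun i _ => (hW i).mul (hS.pow_const _)]
        congr with ω
        rw [ENNReal.rpow_eq_mul_rpow_sub_one _ hq, sum_mul]
    _ ≤ ∑ i ∈ s, 2 ^ (q - 1) * (∫⁻ ω, W i ω ^ q ∂P +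
          (∫⁻ ω, W i ω ∂P) * ∫⁻ ω, (∑ j ∈ s, W j ω) ^ (q - 1) ∂P) :=
        sum_le_sum fun i hi => hind.lintegral_mul_rpow_sum_le hW hq hi
    _ = 2 ^ (q - 1) * (∑ i ∈ s, ∫⁻ ω, W i ω ^ q ∂P +
          (∑ i ∈ s, ∫⁻ ω, W i ω ∂P) * ∫⁻ ω, (∑ j ∈ s, W j ω) ^ (q - 1) ∂P) := by
        rw [← mul_sum, sum_add_distrib, sum_mul]
    _ ≤ _ := by
        gcongr
        exact lintegral_rpow_sub_one_le hS hq

lemma lintegral_rpow_sum_le [IsProbabilityMeasure P] {W : ι → Ω → ℝ≥0∞}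
    (hind : iIndepFun W P) (hW : ∀ i, AEMeasurable (W i) P) (hq : 1 ≤ q) (s : Finset ι) :
    ∫⁻ ω, (∑ i ∈ s, W i ω) ^ q ∂P ≤
      2 ^ (q * q) * max ((∑ i ∈ s, ∫⁻ ω, W i ω ∂P) ^ q) (∑ i ∈ s, ∫⁻ ω, W i ω ^ q ∂P) := by
  set m := ∑ i ∈ s, ∫⁻ ω, W i ω ∂P
  set B := ∑ i ∈ s, ∫⁻ ω, W i ω ^ q ∂P
  rcases eq_or_ne B ∞ with hB | hB
  · simp [hB]
  have htwo : (2 : ℝ≥0∞) * 2 ^ (q - 1) = 2 ^ q := (ENNReal.rpow_eq_mul_rpow_sub_one _ hq).symm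
  calc ∫⁻ ω, (∑ i ∈ s, W i ω) ^ q ∂P
      ≤ max ((2 * 2 ^ (q - 1) * m) ^ q) (2 * 2 ^ (q - 1) * B) :=
        ENNReal.le_max_of_le_mul_add_mul_rpow (lintegral_rpow_sum_ne_top hW hq hB) hq
          (hind.lintegral_rpow_sum_le_self_bound hW hq s)
    _ = max (2 ^ (q * q) * m ^ q) (2 ^ q * B) := by
        rw [htwo, ENNReal.mul_rpow_of_nonneg _ _ (by linarith), ← ENNReal.rpow_mul]
    _ ≤ 2 ^ (q * q) * max (m ^ q) B := by
        rw [mul_max]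
        gcongr
        · exact one_le_two
        · nlinarith

theorem lintegral_rpow_tsum_le [IsProbabilityMeasure P] {W : ℕ → Ω → ℝ≥0∞}
    (hind : iIndepFun W P) (hW : ∀ n, AEMeasurable (W n) P) (hq : 1 ≤ q) :
    ∫⁻ ω, (∑' n, W n ω) ^ q ∂P ≤
      2 ^ (q * q) * max ((∑' n, ∫⁻ ω, W n ω ∂P) ^ q) (∑' n, ∫⁻ ω, W n ω ^ q ∂P) := by
  have hmono : ∀ ω, Monotone fun N => (∑ i ∈ range N, W i ω) ^ q := fun ω a b hab =>
    ENNReal.rpow_le_rpow (sum_le_sum_of_subset (range_subset_range.2 hab)) (by linarith)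
  have hlim : ∀ ω, (∑' n, W n ω) ^ q = ⨆ N, (∑ i ∈ range N, W i ω) ^ q := fun ω =>
    tendsto_nhds_unique
      ((ENNReal.continuous_rpow_const.tendsto _).comp (ENNReal.tendsto_nat_tsum _))
      (tendsto_atTop_iSup (hmono ω))
  calc ∫⁻ ω, (∑' n, W n ω) ^ q ∂P = ⨆ N, ∫⁻ ω, (∑ i ∈ range N, W i ω) ^ q ∂P := by
        simp_rw [hlim]
        exact lintegral_iSup'
          (fun N => ((range N).aemeasurable_fun_sum fun i _ => hW i).pow_const q)
          (ae_of_all _ hmono)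
    _ ≤ _ := iSup_le fun N => (hind.lintegral_rpow_sum_le hW hq _).trans <| by
        gcongr <;> exact ENNReal.sum_le_tsum _

theorem integral_rpow_tsum_le [IsProbabilityMeasure P] {Z : ℕ → Ω → ℝ} (hind : iIndepFun Z P)
    (hZ : ∀ n ω, 0 ≤ Z n ω) (hint : ∀ n, Integrable (Z n) P)
    (hintq : ∀ n, Integrable (fun ω => Z n ω ^ q) P) (hsum : Summable fun n => ∫ ω, Z n ω ∂P)
    (hsumq : Summable fun n => ∫ ω, Z n ω ^ q ∂P) (hq : 1 ≤ q) :
    ∫ ω, (∑' n, Z n ω) ^ q ∂P ≤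
      2 ^ (q * q) * max ((∑' n, ∫ ω, Z n ω ∂P) ^ q) (∑' n, ∫ ω, Z n ω ^ q ∂P) := by
  have hZq : ∀ n ω, 0 ≤ Z n ω ^ q := fun n ω => Real.rpow_nonneg (hZ n ω) q
  have hindW : iIndepFun (fun n ω => ENNReal.ofReal (Z n ω)) P :=
    hind.comp (fun _ => ENNReal.ofReal) fun _ => ENNReal.measurable_ofReal
  have hmom : ∑' n, ∫⁻ ω, ENNReal.ofReal (Z n ω) ^ q ∂P =
      ENNReal.ofReal (∑' n, ∫ ω, Z n ω ^ q ∂P) := by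
    simp_rw [ENNReal.ofReal_rpow_of_nonneg (hZ _ _) (by linarith : 0 ≤ q)]
    exact tsum_lintegral_ofReal hZq hintq hsumq
  rw [← ENNReal.ofReal_le_ofReal_iff (mul_nonneg (by positivity)
    (le_max_of_le_right (tsum_nonneg fun n => integral_nonneg (hZq n))))]
  calc ENNReal.ofReal (∫ ω, (∑' n, Z n ω) ^ q ∂P)
      ≤ ∫⁻ ω, (∑' n, ENNReal.ofReal (Z n ω)) ^ q ∂P :=
        (ofReal_integral_le_lintegral_ofReal fun ω =>
          Real.rpow_nonneg (tsum_nonneg (hZ · ω)) q).trans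
            (lintegral_mono fun ω => ENNReal.ofReal_rpow_tsum_le (hZ · ω) (by linarith))
    _ ≤ 2 ^ (q * q) * max ((∑' n, ∫⁻ ω, ENNReal.ofReal (Z n ω) ∂P) ^ q)
          (∑' n, ∫⁻ ω, ENNReal.ofReal (Z n ω) ^ q ∂P) :=
        hindW.lintegral_rpow_tsum_le (fun n => (hint n).1.aemeasurable.ennreal_ofReal) hq
    _ = _ := by
        rw [tsum_lintegral_ofReal hZ hint hsum, hmom, ENNReal.ofReal_mul (by positivity),
          ENNReal.ofReal_max,
          ← ENNReal.ofReal_rpow_of_nonneg (tsum_nonneg fun n => integral_nonneg (hZ n))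
            (by linarith),
          ← ENNReal.ofReal_rpow_of_pos two_pos, ENNReal.ofReal_ofNat]

end ProbabilityTheory.iIndepFun

theorem stmt15 (p : ℝ) (hp : 2 ≤ p) :
    ∃ C : ℝ, 0 < C ∧
    ∀ (Ω : Type) (_ : MeasurableSpace Ω) (P : Measure Ω)
      (_ : IsProbabilityMeasure P) (Z : ℕ → Ω → ℝ),
      iIndepFun Z P →
      (∀ n ω, 0 ≤ Z n ω) →
      (∀ n, Integrable (Z n) P) →
      (∀ n, Integrable (fun ω => Z n ω ^ (p / 2)) P) →
      Summable (fun n => ∫ ω, Z n ω ∂P) →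
      Summable (fun n => ∫ ω, Z n ω ^ (p / 2) ∂P) →
      (∫ ω, (∑' n, Z n ω) ^ (p / 2) ∂P)
        ≤ C * max ((∑' n, ∫ ω, Z n ω ∂P) ^ (p / 2)) (∑' n, ∫ ω, Z n ω ^ (p / 2) ∂P) :=
  ⟨2 ^ (p / 2 * (p / 2)), by positivity, fun _ _ _ _ _ hind hZ hint hintq hsum hsumq =>
    hind.integral_rpow_tsum_le hZ hint hintq hsum hsumq (by linarith)⟩
end
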